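/- arXiv:1006.3514 — 3 statements merged into one kernel-verified Lean document; each statement's English description precedes it below -/
import Mathlib

section
/- Let δ > 0 and let 0 < c ≤ x. Then φ(δ/x) − φ(2δ/x) ≥ φ(δ/c) − φ(2δ/c); equivalently, the function y ↦ φ(y) − φ(2y) is nonincreasing on (0, ∞). -/
open MeasureTheory ProbabilityTheory Real
open scoped ENNReal

noncomputable section

/-- Standard inner product on `Fin d → ℝ`. -/
def dotp {d : ℕ} (a x : Fin d → ℝ) : ℝ := ∑ i, a i * x i

/-- Euclidean norm on `Fin d → ℝ`. -/
def enorm' {d : ℕ} (x : Fin d → ℝ) : ℝ := Real.sqrt (∑ i, x i ^ 2)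

/-- Ternary hash index `⌊(⟨a,p⟩ + b)/δ⌋ mod 4`. -/
def hashIdx {d : ℕ} (δ : ℝ) (a : Fin d → ℝ) (b : ℝ) (p : Fin d → ℝ) : ℤ :=
  ⌊(dotp a p + b) / δ⌋ % 4

/-- `s` and `q` mismatch: one hash index is 0 (ternary symbol `0`) and the other is 2
(ternary symbol `1`). -/
def Mismatch {d : ℕ} (δ : ℝ) (a : Fin d → ℝ) (b : ℝ) (s q : Fin d → ℝ) : Prop :=
  (hashIdx δ a b s = 0 ∧ hashIdx δ a b q = 2) ∨ (hashIdx δ a b s = 2 ∧ hashIdx δ a b q = 0)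

/-- Product of `d` i.i.d. standard Gaussians: the law of `a`. -/
def gaussPi (d : ℕ) : Measure (Fin d → ℝ) := Measure.pi fun _ => gaussianReal 0 1

/-- Uniform probability measure on the interval `(0, 2δ)`: the law of `b`. -/
def unifB (δ : ℝ) : Measure ℝ :=
  (ENNReal.ofReal (2 * δ))⁻¹ • volume.restrict (Set.Ioo 0 (2 * δ))

/-- Joint law of the independent pair `(a, b)`. -/
def jointμ (d : ℕ) (δ : ℝ) : Measure ((Fin d → ℝ) × ℝ) := (gaussPi d).prod (unifB δ)

/-- Mismatch probability `Ψ̄(s,q)` over the random pair `(a, b)`. -/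
def PsiBar (d : ℕ) (δ : ℝ) (s q : Fin d → ℝ) : ℝ≥0∞ :=
  jointμ d δ {ab : (Fin d → ℝ) × ℝ | Mismatch δ ab.1 ab.2 s q}

/-- Complementary cdf `F̄` of the standard normal distribution. -/
def Fbar (y : ℝ) : ℝ := ∫ t in Set.Ioi y, (1 / Real.sqrt (2 * π)) * Real.exp (-t ^ 2 / 2)

/-- The function `φ(y) = e^{-y²/2}/(y√(2π)) - F̄(y)`. -/
def phi (y : ℝ) : ℝ := Real.exp (-y ^ 2 / 2) / (y * Real.sqrt (2 * π)) - Fbar y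

/-- One-dimensional ternary hash index `⌊(u + b)/δ⌋ mod 4`. -/
def jb (δ b u : ℝ) : ℤ := ⌊(u + b) / δ⌋ % 4

/-- One-dimensional mismatch: one index is 0 and the other is 2. -/
def Mismatch1 (δ b u v : ℝ) : Prop :=
  (jb δ b u = 0 ∧ jb δ b v = 2) ∨ (jb δ b u = 2 ∧ jb δ b v = 0)

/-- One-dimensional mismatch probability `ψ̄(u,v)` over `b` uniform on `(0, 2δ)`. -/
def psiBar (δ u v : ℝ) : ℝ≥0∞ := unifB δ {b | Mismatch1 δ b u v}


/-!
Differentiating, the derivative `-e^{-y²/2}/√(2π)` of `F̄` cancels against part of the derivative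
of the first term of `φ`, leaving `φ'(y) = -e^{-y²/2}/(y²√(2π))`. Hence
`(φ(y) - φ(2y))' = (e^{-2y²}/2 - e^{-y²/2})/(y²√(2π)) ≤ 0` on `(0, ∞)`.
-/

open Set

lemma Fbar_eq_setIntegral_gaussianPDFReal (y : ℝ) :
    Fbar y = ∫ t in Ioi y, gaussianPDFReal 0 1 t := by
  simp [Fbar, gaussianPDFReal_def]

lemma hasDerivAt_Fbar (y : ℝ) : HasDerivAt Fbar (-gaussianPDFReal 0 1 y) y := by
  have hint : Integrable (gaussianPDFReal 0 1) := integrable_gaussianPDFReal 0 1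
  have hcont : Continuous (gaussianPDFReal 0 1) := by
    rw [gaussianPDFReal_def]; fun_prop
  have hFbar : Fbar = fun z => Fbar 0 - ∫ t in (0 : ℝ)..z, gaussianPDFReal 0 1 t := by
    funext z
    rw [← intervalIntegral.integral_Ioi_sub_Ioi' hint.integrableOn hint.integrableOn,
      Fbar_eq_setIntegral_gaussianPDFReal, Fbar_eq_setIntegral_gaussianPDFReal, sub_sub_cancel]
  rw [hFbar, ← zero_sub]
  exact (hasDerivAt_const y _).sub (intervalIntegral.integral_hasDerivAt_right
    hint.intervalIntegrable hcont.stronglyMeasurable.stronglyMeasurableAtFilter hcont.continuousAt)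

lemma hasDerivAt_phi {y : ℝ} (hy : y ≠ 0) :
    HasDerivAt phi (-rexp (-y ^ 2 / 2) / (y ^ 2 * √(2 * π))) y := by
  have hexp :
      HasDerivAt (fun y : ℝ => rexp (-y ^ 2 / 2)) (rexp (-y ^ 2 / 2) * (-(2 * y) / 2)) y := by
    simpa using ((hasDerivAt_pow 2 y).neg.div_const 2).exp
  have hlin : HasDerivAt (fun y : ℝ => y * √(2 * π)) (√(2 * π)) y := by
    simpa using (hasDerivAt_id y).mul_const (√(2 * π))
  refine ((hexp.fun_div hlin (by positivity)).sub (hasDerivAt_Fbar y)).congr_deriv ?_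
  simp only [gaussianPDFReal_def, NNReal.coe_one, sub_zero]
  field_simp
  ring

lemma hasDerivAt_phi_sub_phi_two_mul {y : ℝ} (hy : y ≠ 0) :
    HasDerivAt (fun y => phi y - phi (2 * y))
      ((rexp (-(2 * y ^ 2)) / 2 - rexp (-y ^ 2 / 2)) / (y ^ 2 * √(2 * π))) y := by
  have hphi₂ := (hasDerivAt_phi (mul_ne_zero two_ne_zero hy)).comp y
    ((hasDerivAt_id y).const_mul 2)
  refine ((hasDerivAt_phi hy).sub hphi₂).congr_deriv ?_
  field_simp
  ring

lemma antitoneOn_phi_sub_phi_two_mul :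
    AntitoneOn (fun y => phi y - phi (2 * y)) (Ioi 0) := by
  have hderiv (y : ℝ) (hy : 0 < y) := hasDerivAt_phi_sub_phi_two_mul hy.ne'
  refine antitoneOn_of_hasDerivWithinAt_nonpos (convex_Ioi 0)
    (fun y hy => (hderiv y hy).continuousAt.continuousWithinAt)
    (fun y hy => (hderiv y (by simpa using hy)).hasDerivWithinAt) fun y hy => ?_
  rw [interior_Ioi] at hy
  have hexp : rexp (-(2 * y ^ 2)) ≤ rexp (-y ^ 2 / 2) := by
    gcongr; linarith [sq_nonneg y]
  exact div_nonpos_of_nonpos_of_nonneg (by linarith [exp_pos (-(2 * y ^ 2))]) (by positivity)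

/-- for `δ > 0` and `0 < c ≤ x`,
`φ(δ/x) - φ(2δ/x) ≥ φ(δ/c) - φ(2δ/c)`; equivalently, `y ↦ φ(y) - φ(2y)` is
nonincreasing on `(0, ∞)`. -/
theorem phi_sub_phi_antitone :
    (∀ δ c x : ℝ, 0 < δ → 0 < c → c ≤ x →
        phi (δ / c) - phi (2 * δ / c) ≤ phi (δ / x) - phi (2 * δ / x)) ∧
    (∀ y z : ℝ, 0 < y → y ≤ z → phi z - phi (2 * z) ≤ phi y - phi (2 * y)) := by
  have hanti (y z : ℝ) (hy : 0 < y) (hyz : y ≤ z) : phi z - phi (2 * z) ≤ phi y - phi (2 * y) :=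
    antitoneOn_phi_sub_phi_two_mul hy (hy.trans_le hyz) hyz
  refine ⟨fun δ c x hδ hc hcx => ?_, hanti⟩
  simpa only [mul_div_assoc] using
    hanti (δ / x) (δ / c) (div_pos hδ (hc.trans_le hcx)) (div_le_div_of_nonneg_left hδ.le hc hcx)

end
end

section
/- Let d ≥ 1 and δ > 0. For every a ∈ ℝ^d, every b ∈ ℝ, and all points s, q ∈ ℝ^d with |⟨a, s − q⟩| ≤ δ, the points s and q do not mismatch, i.e. it is not the case that one of the indices j_{a,b}(s), j_{a,b}(q) equals 0 and the other equals 2. (Points whose projections onto a differ by at most δ always receive matching ternary hashes.) -/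
open MeasureTheory ProbabilityTheory Real
open scoped ENNReal

noncomputable section

/-! Two reals at distance at most 1 have floors at distance at most 1, and two integers at
distance at most 1 cannot be congruent to 0 and 2 modulo 4. Dividing by `δ` turns the hypothesis
into the first condition for the two arguments of the floor in `hashIdx`. -/

lemma dotp_sub {d : ℕ} (a x y : Fin d → ℝ) : dotp a (x - y) = dotp a x - dotp a y := by
  simp only [dotp, Pi.sub_apply, mul_sub, Finset.sum_sub_distrib]

lemma abs_div_sub_div_le_one {u v δ : ℝ} (h : |u - v| ≤ δ) : |u / δ - v / δ| ≤ 1 := by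
  rw [← sub_div, abs_div]
  exact div_le_one_of_le₀ (h.trans (le_abs_self δ)) (abs_nonneg δ)

section Floor

variable {R : Type*} [Ring R] [LinearOrder R] [FloorRing R] [IsOrderedRing R]

lemma Int.floor_le_floor_add_one_of_le_add_one {x y : R} (h : x ≤ y + 1) : ⌊x⌋ ≤ ⌊y⌋ + 1 :=
  (Int.floor_mono h).trans_eq (Int.floor_add_one y)

lemma Int.abs_floor_sub_floor_le_one {x y : R} (h : |x - y| ≤ 1) : |⌊x⌋ - ⌊y⌋| ≤ 1 := by
  obtain ⟨hyx, hxy⟩ := abs_sub_le_iff.mp h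
  have hx := Int.floor_le_floor_add_one_of_le_add_one (sub_le_iff_le_add'.mp hxy)
  have hy := Int.floor_le_floor_add_one_of_le_add_one (sub_le_iff_le_add'.mp hyx)
  rw [abs_sub_le_iff]
  constructor <;> linarith

end Floor

lemma Int.emod_four_ne_two_of_abs_sub_le_one {m n : ℤ} (h : |m - n| ≤ 1) (hm : m % 4 = 0) :
    n % 4 ≠ 2 := by
  rw [abs_le] at h
  omega

theorem no_mismatch_of_close_projection_general (d : ℕ) (δ : ℝ)
    (a : Fin d → ℝ) (b : ℝ) (s q : Fin d → ℝ) (h : |dotp a (s - q)| ≤ δ) :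
    ¬ Mismatch δ a b s q := by
  have hfloor : |⌊(dotp a s + b) / δ⌋ - ⌊(dotp a q + b) / δ⌋| ≤ 1 := by
    refine Int.abs_floor_sub_floor_le_one (abs_div_sub_div_le_one ?_)
    rwa [add_sub_add_right_eq_sub, ← dotp_sub]
  rintro (⟨hs, hq⟩ | ⟨hs, hq⟩)
  · exact Int.emod_four_ne_two_of_abs_sub_le_one hfloor hs hq
  · exact Int.emod_four_ne_two_of_abs_sub_le_one ((abs_sub_comm _ _).trans_le hfloor) hq hs

/-- if the projections of `s` and `q` onto `a` differ by at most `δ`,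
then `s` and `q` never mismatch. -/
theorem no_mismatch_of_close_projection (d : ℕ) (hd : 1 ≤ d) (δ : ℝ) (hδ : 0 < δ)
    (a : Fin d → ℝ) (b : ℝ) (s q : Fin d → ℝ) (h : |dotp a (s - q)| ≤ δ) :
    ¬ Mismatch δ a b s q :=
  no_mismatch_of_close_projection_general d δ a b s q h

end
end

section
/- Let δ > 0 and let u, v ∈ ℝ with |u − v| > δ. Then the probability over b uniform on (0, 2δ) that u and v mismatch satisfies ψ̄(u, v) ≤ (|u − v| − δ)/(2δ). -/
open MeasureTheory ProbabilityTheory Real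
open scoped ENNReal

noncomputable section

/-! Shifting `b` by `2δ` adds `2` to both hash indices mod `4`, which swaps the labels `0` and `2`,
so the mismatch set is `2δ`-periodic and its measure in `(0, 2δ]` equals its measure in any window
of length `2δ`. For `u ≤ v`, take the window where `u + b ∈ (-δ, δ]`: there a mismatch forces
`⌊(u + b)/δ⌋ = 0` and `⌊(v + b)/δ⌋ ≥ 2`, which confines `b` to `[2δ - v, δ - u]`, an interval of
length `v - u - δ`. -/

open Set

theorem volume_inter_Ioc_eq_of_periodic {T : ℝ} (hT : 0 < T) {A : Set ℝ} (hA : MeasurableSet A)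
    (hper : Function.Periodic (· ∈ A) T) (t s : ℝ) :
    volume (A ∩ Ioc t (t + T)) = volume (A ∩ Ioc s (s + T)) := by
  refine (isAddFundamentalDomain_Ioc hT t).measure_set_eq (isAddFundamentalDomain_Ioc hT s) hA ?_
  rintro ⟨g, n, rfl⟩
  ext x
  simpa [add_comm] using hper.zsmul n x

theorem jb_add_two_mul {δ : ℝ} (hδ : δ ≠ 0) (b u : ℝ) :
    jb δ (b + 2 * δ) u = (jb δ b u + 2) % 4 := by
  have : (u + (b + 2 * δ)) / δ = (u + b) / δ + 2 := by field_simp; ring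
  rw [jb, jb, this, Int.floor_add_ofNat]
  omega

theorem mismatch1_add_two_mul {δ : ℝ} (hδ : δ ≠ 0) (b u v : ℝ) :
    Mismatch1 δ (b + 2 * δ) u v ↔ Mismatch1 δ b u v := by
  simp only [Mismatch1, jb_add_two_mul hδ]
  unfold jb
  omega

theorem mismatch1_comm (δ b u v : ℝ) : Mismatch1 δ b u v ↔ Mismatch1 δ b v u := by
  unfold Mismatch1
  tauto

theorem measurableSet_mismatch1 (δ u v : ℝ) : MeasurableSet {b | Mismatch1 δ b u v} := by
  have hjb (w : ℝ) : Measurable (jb δ · w) := by unfold jb; fun_prop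
  unfold Mismatch1
  measurability

theorem psiBar_comm (δ u v : ℝ) : psiBar δ u v = psiBar δ v u := by
  simp only [psiBar, mismatch1_comm δ _ u v]

theorem mismatch1_inter_Ioc_subset {δ u v : ℝ} (hδ : 0 < δ) (huv : u ≤ v) :
    {b | Mismatch1 δ b u v} ∩ Ioc (-δ - u) (-δ - u + 2 * δ) ⊆ Icc (2 * δ - v) (δ - u) := by
  rintro b ⟨hmis : Mismatch1 δ b u v, hb₁, hb₂⟩
  have hm₁ : -1 ≤ ⌊(u + b) / δ⌋ := by
    rw [Int.le_floor, le_div_iff₀ hδ]; push_cast; linarith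
  have hm₂ : ⌊(u + b) / δ⌋ < 2 := by
    rw [Int.floor_lt, div_lt_iff₀ hδ]; push_cast; linarith
  have hmn : ⌊(u + b) / δ⌋ ≤ ⌊(v + b) / δ⌋ :=
    Int.floor_mono (div_le_div_of_nonneg_right (by linarith) hδ.le)
  have hn : 2 ≤ ⌊(v + b) / δ⌋ := by
    simp only [Mismatch1, jb] at hmis
    omega
  rw [Int.le_floor, le_div_iff₀ hδ] at hn
  push_cast at hn
  constructor <;> linarith

theorem psiBar_le_of_le {δ u v : ℝ} (hδ : 0 < δ) (huv : u ≤ v) :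
    psiBar δ u v ≤ ENNReal.ofReal ((v - u - δ) / (2 * δ)) := by
  set S := {b | Mismatch1 δ b u v}
  have hper : Function.Periodic (· ∈ S) (2 * δ) := fun b =>
    propext (mismatch1_add_two_mul hδ.ne' b u v)
  calc psiBar δ u v
      = (ENNReal.ofReal (2 * δ))⁻¹ * volume (S ∩ Ioo 0 (2 * δ)) := by
        rw [psiBar, unifB, Measure.smul_apply, Measure.restrict_apply' measurableSet_Ioo,
          smul_eq_mul]
    _ ≤ (ENNReal.ofReal (2 * δ))⁻¹ * volume (S ∩ Ioc 0 (0 + 2 * δ)) := by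
        rw [zero_add]; gcongr; exact Ioo_subset_Ioc_self
    _ = (ENNReal.ofReal (2 * δ))⁻¹ * volume (S ∩ Ioc (-δ - u) (-δ - u + 2 * δ)) := by
        rw [volume_inter_Ioc_eq_of_periodic (by positivity) (measurableSet_mismatch1 δ u v) hper]
    _ ≤ (ENNReal.ofReal (2 * δ))⁻¹ * volume (Icc (2 * δ - v) (δ - u)) := by
        gcongr; exact mismatch1_inter_Ioc_subset hδ huv
    _ = ENNReal.ofReal ((v - u - δ) / (2 * δ)) := by
        rw [Real.volume_Icc, ENNReal.ofReal_div_of_pos (by positivity), ENNReal.div_eq_inv_mul]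
        ring_nf

theorem psiBar_le_of_far_general (δ u v : ℝ) (hδ : 0 < δ) :
    psiBar δ u v ≤ ENNReal.ofReal ((|u - v| - δ) / (2 * δ)) := by
  rcases le_total u v with huv | hvu
  · rw [abs_sub_comm, abs_of_nonneg (sub_nonneg.2 huv)]
    exact psiBar_le_of_le hδ huv
  · rw [psiBar_comm, abs_of_nonneg (sub_nonneg.2 hvu)]
    exact psiBar_le_of_le hδ hvu

/-- for `|u - v| > δ`, the one-dimensional mismatch probability is at
most `(|u - v| - δ)/(2δ)`. -/
theorem psiBar_le_of_far (δ u v : ℝ) (hδ : 0 < δ) (h : δ < |u - v|) :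
    psiBar δ u v ≤ ENNReal.ofReal ((|u - v| - δ) / (2 * δ)) :=
  psiBar_le_of_far_general δ u v hδ

end
end
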